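/- arXiv:2502.14674 — 2 statements merged into one kernel-verified Lean document; each statement's English description precedes it below -/
import Mathlib

section
/- Let m be a positive integer with gcd(5,m)=1 and let b ∈ F_{2^{10m}} satisfy b^{10} + b^6 + b^5 + b^3 + b^2 + b + 1 = 0. Then Tr_{2m}^{10m}(b^{33}) = 0, where Tr_{2m}^{10m} is the relative trace from F_{2^{10m}} to F_{2^{2m}}. -/
/-!
For `c = b ^ 33`, the relation satisfied by `b` forces `c + c² + c⁴ + c⁸ + c¹⁶ = 0` in
characteristic 2 (the conjugates of `c`, reduced modulo that relation, cancel in pairs).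
Applying Frobenius to this relation gives `c³² = c`, so `c ^ 2 ^ k` only depends on `k mod 5`.
Since `5 ∤ m`, the exponents `0, 2m, 4m, 6m, 8m` run over all residues mod 5, and the relative
trace of `c` is the sum above.
-/

open Finset

theorem pow_pow_eq_self_of_sum_pow_pow_eq_zero {R : Type*} [CommRing R] (p : ℕ) [ExpChar R p]
    {c : R} {n : ℕ} (h : ∑ i ∈ range n, c ^ p ^ i = 0) : c ^ p ^ n = c := by
  have hfrob : ∑ i ∈ range n, c ^ p ^ (i + 1) = 0 := by
    simpa only [pow_succ, pow_mul, sum_pow_char, zero_pow (expChar_pos R p).ne'] using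
      congrArg (· ^ p) h
  calc c ^ p ^ n = ∑ i ∈ range (n + 1), c ^ p ^ i := by rw [sum_range_succ, h, zero_add]
    _ = c := by rw [sum_range_succ', hfrob, pow_zero, pow_one, zero_add]

theorem pow_pow_eq_pow_pow_mod {M : Type*} [Monoid M] {x : M} {q n : ℕ} (h : x ^ q ^ n = x)
    (k : ℕ) : x ^ q ^ k = x ^ q ^ (k % n) := by
  have hmul : ∀ a, x ^ q ^ (n * a) = x := by
    intro a
    induction a with
    | zero => simp
    | succ a ih => rw [Nat.mul_succ, pow_add, pow_mul, ih, h]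
  conv_lhs => rw [← Nat.div_add_mod k n, pow_add, pow_mul, hmul]

theorem sum_two_pow_pow_33_eq_zero_of_root {R : Type*} [CommRing R] [CharP R 2] {b : R}
    (hb : b ^ 10 + b ^ 6 + b ^ 5 + b ^ 3 + b ^ 2 + b + 1 = 0) :
    ∑ i ∈ range 5, (b ^ 33) ^ 2 ^ i = 0 := by
  have h1 : b ^ 33 = b ^ 8 + b ^ 6 + b ^ 2 := by grind
  have h2 : (b ^ 33) ^ 2 = b ^ 9 + b ^ 8 + b ^ 3 + b ^ 2 + b := by grind
  have h4 : (b ^ 33) ^ 4 = b ^ 7 + b ^ 5 := by grind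
  have h8 : (b ^ 33) ^ 8 = b ^ 9 + b ^ 7 + b ^ 6 + b ^ 5 + b ^ 4 := by grind
  have h16 : (b ^ 33) ^ 16 = b ^ 4 + b ^ 3 + b := by grind
  simp only [sum_range_succ, sum_range_zero]
  grind

theorem stmt_7_general (m : ℕ) (h5 : Nat.gcd 5 m = 1)
    (F : Type*) [Field F] [Fintype F] (hF : Fintype.card F = 2 ^ (10 * m))
    (b : F) (hb : b ^ 10 + b ^ 6 + b ^ 5 + b ^ 3 + b ^ 2 + b + 1 = 0) :
    b ^ 33 + (b ^ 33) ^ (2 ^ (2 * m)) + (b ^ 33) ^ (2 ^ (4 * m))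
      + (b ^ 33) ^ (2 ^ (6 * m)) + (b ^ 33) ^ (2 ^ (8 * m)) = 0 := by
  have : CharP F 2 := charP_of_card_eq_prime_pow hF
  have htrace := sum_two_pow_pow_33_eq_zero_of_root hb
  have hperiod := pow_pow_eq_pow_pow_mod (pow_pow_eq_self_of_sum_pow_pow_eq_zero 2 htrace)
  have hm : ¬ 5 ∣ m := (Nat.Prime.coprime_iff_not_dvd Nat.prime_five).1 h5
  simp only [sum_range_succ, sum_range_zero] at htrace
  rw [hperiod (2 * m), hperiod (4 * m), hperiod (6 * m), hperiod (8 * m)]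
  obtain hr | hr | hr | hr : m % 5 = 1 ∨ m % 5 = 2 ∨ m % 5 = 3 ∨ m % 5 = 4 := by omega
  all_goals
    rw [Nat.mul_mod 2, Nat.mul_mod 4, Nat.mul_mod 6, Nat.mul_mod 8, hr]
    norm_num at htrace ⊢
    linear_combination htrace

/-- If `gcd(5,m)=1` and `b ∈ F_{2^{10m}}` satisfies
`b^10 + b^6 + b^5 + b^3 + b^2 + b + 1 = 0`, then `Tr_{2m}^{10m}(b^33) = 0`. -/
theorem stmt_7 (m : ℕ) (hm : 0 < m) (h5 : Nat.gcd 5 m = 1)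
    (F : Type*) [Field F] [Fintype F] (hF : Fintype.card F = 2 ^ (10 * m))
    (b : F) (hb : b ^ 10 + b ^ 6 + b ^ 5 + b ^ 3 + b ^ 2 + b + 1 = 0) :
    b ^ 33 + (b ^ 33) ^ (2 ^ (2 * m)) + (b ^ 33) ^ (2 ^ (4 * m))
      + (b ^ 33) ^ (2 ^ (6 * m)) + (b ^ 33) ^ (2 ^ (8 * m)) = 0 :=
  stmt_7_general m h5 F hF b hb
end

section
/- Let q = 2^m. The trinomial X^3(X^{3(q−1)} + X^{(q−1)} + 1) and the trinomial X^{11}(X^{10(q−1)} + X^{4(q−1)} + 1) are quasi-multiplicatively inequivalent over F_{q^2}: there is no integer d with gcd(d, q^2−1)=1 such that {11d, (4q+7)d, (10q+1)d} = {3, 3q, q+2} as multisets modulo q^2−1 (for q > 4). -/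
/-!
Since `q + 1 ∣ q² - 1`, the multiset identity survives reduction modulo `q + 1`, where `q ≡ -1`;
there it reads `{11d, 3d, -9d} = {3, -3, 1}`. Comparing sums gives `5d = 1`, and whichever of
`11d, 3d, -9d` equals `1` then forces `6 = 0` or `14 = 0` modulo `q + 1`, impossible for an even
`q ≥ 8`.
-/

theorem Multiset.map_natCast_eq_of_map_mod_eq {n k : ℕ} (hk : k ∣ n) {s t : Multiset ℕ}
    (h : s.map (· % n) = t.map (· % n)) :
    s.map (Nat.cast : ℕ → ZMod k) = t.map (Nat.cast : ℕ → ZMod k) := by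
  have hcast : ∀ a : ℕ, ((a % n : ℕ) : ZMod k) = a := fun a => by
    rw [ZMod.natCast_eq_natCast_iff', Nat.mod_mod_of_dvd a hk]
  simpa only [Multiset.map_map, Function.comp_def, hcast] using
    congrArg (Multiset.map (Nat.cast : ℕ → ZMod k)) h

theorem six_eq_zero_or_fourteen_eq_zero_of_multiset_eq {R : Type*} [CommRing R] {d : R}
    (h : ({11 * d, 3 * d, -9 * d} : Multiset R) = {3, -3, 1}) :
    (6 : R) = 0 ∨ (14 : R) = 0 := by
  have hsum : 5 * d = 1 := by
    have := congrArg Multiset.sum h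
    simp only [Multiset.insert_eq_cons, Multiset.sum_cons, Multiset.sum_singleton] at this
    linear_combination this
  have hone : (1 : R) ∈ ({11 * d, 3 * d, -9 * d} : Multiset R) := by
    rw [h]; simp
  simp only [Multiset.insert_eq_cons, Multiset.mem_cons, Multiset.mem_singleton] at hone
  rcases hone with h11 | h3 | h9
  · left; linear_combination -11 * hsum - 5 * h11
  · left; linear_combination 9 * hsum + 15 * h3
  · right; linear_combination -9 * hsum + 5 * h9

/-- For `q = 2^m` with `q > 4`, there is no unit `d` modulo `q^2-1` such that the
multisets `{11d, (4q+7)d, (10q+1)d}` and `{3, 3q, q+2}` coincide modulo `q^2-1`;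
hence `X^3(X^{3(q-1)}+X^{q-1}+1)` and `X^{11}(X^{10(q-1)}+X^{4(q-1)}+1)` are
quasi-multiplicatively inequivalent over `F_{q^2}`. -/
theorem stmt_13 (m q : ℕ) (hq : q = 2 ^ m) (hq4 : 4 < q) :
    ¬ ∃ d : ℕ, Nat.gcd d (q ^ 2 - 1) = 1 ∧
      Multiset.map (· % (q ^ 2 - 1))
          ({11 * d, (4 * q + 7) * d, (10 * q + 1) * d} : Multiset ℕ) =
        Multiset.map (· % (q ^ 2 - 1)) ({3, 3 * q, q + 2} : Multiset ℕ) := by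
  rintro ⟨d, -, h⟩
  have hm : 3 ≤ m := by
    by_contra! hm
    interval_cases m <;> omega
  have h8 : 8 ≤ q := hq ▸ Nat.pow_le_pow_right two_pos hm
  have heven : 2 ∣ q := hq ▸ dvd_pow_self 2 (by omega)
  have hdvd : q + 1 ∣ q ^ 2 - 1 := by simpa using Dvd.intro _ (Nat.sq_sub_sq q 1).symm
  have hq1 : (q : ZMod (q + 1)) = -1 :=
    eq_neg_of_add_eq_zero_left (by exact_mod_cast ZMod.natCast_self (q + 1))
  have hmod := Multiset.map_natCast_eq_of_map_mod_eq hdvd h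
  push_cast [Multiset.insert_eq_cons, Multiset.map_cons, Multiset.map_singleton, hq1] at hmod
  obtain h6 | h14 := six_eq_zero_or_fourteen_eq_zero_of_multiset_eq (d := (d : ZMod (q + 1)))
    (by norm_num [Multiset.insert_eq_cons] at hmod ⊢; exact hmod)
  · have h6 := (ZMod.natCast_eq_zero_iff 6 (q + 1)).mp (by exact_mod_cast h6)
    have := Nat.le_of_dvd (by norm_num) h6
    omega
  · have h14 := (ZMod.natCast_eq_zero_iff 14 (q + 1)).mp (by exact_mod_cast h14)
    have := Nat.eq_of_dvd_of_lt_two_mul (by norm_num) h14 (by omega)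
    omega
end
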